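/- Fuzzy subgraph connectivity need not be transitive: there exists a fuzzy graph G with pairwise disjoint proper induced fuzzy subgraphs H1, H2, H3 and a value t such that CONN_G(H1,H2) = t and CONN_G(H2,H3) = t, but CONN_G(H1,H3) ≠ t. -/

import Mathlib

/-- A fuzzy graph on vertex set `V`: vertex memberships `sigma` and symmetric
edge memberships `mu` with `mu u v ≤ min (sigma u) (sigma v)`. -/
structure FuzzyGraph (V : Type*) where
  sigma : V → ℝ
  mu : V → V → ℝ
  sigma_nonneg : ∀ v, 0 ≤ sigma v
  sigma_le_one : ∀ v, sigma v ≤ 1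
  mu_nonneg : ∀ u v, 0 ≤ mu u v
  mu_symm : ∀ u v, mu u v = mu v u
  mu_le : ∀ u v, mu u v ≤ min (sigma u) (sigma v)

variable {V : Type*}

/-- Strength of a path given as a list of vertices: the minimum of the edge
memberships along consecutive pairs (with neutral value 1). -/
def pathStrength (μ : V → V → ℝ) (l : List V) : ℝ :=
  ((l.zip l.tail).map fun p => μ p.1 p.2).foldr min 1

/-- `l` is a walk from `u` to `v` in the fuzzy graph with edge function `μ`:
all consecutive memberships are positive, and `l` has at least one edge. -/
def IsWalk (μ : V → V → ℝ) (u v : V) (l : List V) : Prop :=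
  l.Chain' (fun a b => 0 < μ a b) ∧ l.head? = some u ∧ l.getLast? = some v ∧ 2 ≤ l.length

/-- Max–min connectivity between two vertices: supremum of path strengths. -/
noncomputable def conn (μ : V → V → ℝ) (u v : V) : ℝ :=
  sSup {s | ∃ l, IsWalk μ u v l ∧ pathStrength μ l = s}

/-- Connectivity from a vertex `x` to a subgraph with vertex set `S`. -/
noncomputable def connVS (μ : V → V → ℝ) (x : V) (S : Set V) : ℝ :=
  sSup {s | ∃ u ∈ S, conn μ x u = s}

/-- Connectivity between two subgraphs with vertex sets `S1`, `S2`. -/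
noncomputable def connSS (μ : V → V → ℝ) (S1 S2 : Set V) : ℝ :=
  sSup {s | ∃ u ∈ S1, ∃ v ∈ S2, conn μ u v = s}


/-! Take the triangle on `0, 1, 2` with `μ(0,1) = μ(1,2) = 1/2` and `μ(0,2) = 1`. Every path
starting or ending at `1` leaves or enters it along an edge of membership `1/2`, so
`CONN({0},{1}) = CONN({1},{2}) = 1/2`, while the edge `0 — 2` alone gives `CONN({0},{2}) = 1`. -/

section Connectivity

variable {μ : V → V → ℝ} {u v : V} {c : ℝ}

lemma pathStrength_le_one (μ : V → V → ℝ) : ∀ l : List V, pathStrength μ l ≤ 1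
  | [] | [_] => le_rfl
  | _ :: b :: l => (min_le_right _ _).trans (pathStrength_le_one μ (b :: l))

lemma pathStrength_le_of_head?_eq (h : ∀ b, μ u b ≤ c) :
    ∀ {l : List V}, l.head? = some u → 2 ≤ l.length → pathStrength μ l ≤ c
  | [], _, hl | [_], _, hl => by simp at hl
  | _ :: b :: _, hu, _ => by
    cases Option.some.inj hu
    exact (min_le_left _ _).trans (h b)

lemma pathStrength_le_of_getLast?_eq (h : ∀ a, μ a v ≤ c) :
    ∀ {l : List V}, l.getLast? = some v → 2 ≤ l.length → pathStrength μ l ≤ c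
  | [], _, hl | [_], _, hl => by simp at hl
  | [a, _], hv, _ => by
    cases Option.some.inj hv
    exact (min_le_left _ _).trans (h a)
  | _ :: b :: d :: l, hv, _ =>
    (min_le_right _ _).trans
      (pathStrength_le_of_getLast?_eq h (l := b :: d :: l) (by simpa using hv) (by simp))

lemma le_conn {l : List V} (hl : IsWalk μ u v l) : pathStrength μ l ≤ conn μ u v :=
  le_csSup ⟨1, by rintro _ ⟨l, -, rfl⟩; exact pathStrength_le_one μ l⟩ ⟨l, hl, rfl⟩

lemma conn_le_of_forall_mu_left_le (hc : 0 ≤ c) (h : ∀ b, μ u b ≤ c) : conn μ u v ≤ c :=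
  Real.sSup_le
    (by rintro _ ⟨l, ⟨-, hu, -, hlen⟩, rfl⟩; exact pathStrength_le_of_head?_eq h hu hlen) hc

lemma conn_le_of_forall_mu_right_le (hc : 0 ≤ c) (h : ∀ a, μ a v ≤ c) : conn μ u v ≤ c :=
  Real.sSup_le
    (by rintro _ ⟨l, ⟨-, -, hv, hlen⟩, rfl⟩; exact pathStrength_le_of_getLast?_eq h hv hlen) hc

lemma connSS_singleton (μ : V → V → ℝ) (a b : V) : connSS μ {a} {b} = conn μ a b := by
  have h : {s | ∃ u ∈ ({a} : Set V), ∃ v ∈ ({b} : Set V), conn μ u v = s} = {conn μ a b} := by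
    ext s; simp [eq_comm]
  rw [connSS, h, csSup_singleton]

end Connectivity

lemma FuzzyGraph.mu_le_conn (G : FuzzyGraph V) {u v : V} (h : 0 < G.mu u v) :
    G.mu u v ≤ conn G.mu u v := by
  have hle_one : G.mu u v ≤ 1 := (G.mu_le u v).trans ((min_le_left _ _).trans (G.sigma_le_one u))
  have hwalk : IsWalk G.mu u v [u, v] := ⟨List.isChain_pair.2 h, rfl, rfl, le_rfl⟩
  simpa [pathStrength, hle_one] using le_conn hwalk

noncomputable def triangle : FuzzyGraph (Fin 3) where
  sigma _ := 1
  mu := ![![0, 1/2, 1], ![1/2, 0, 1/2], ![1, 1/2, 0]]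
  sigma_nonneg _ := zero_le_one
  sigma_le_one _ := le_rfl
  mu_nonneg u v := by fin_cases u <;> fin_cases v <;> norm_num
  mu_symm u v := by fin_cases u <;> fin_cases v <;> rfl
  mu_le u v := by fin_cases u <;> fin_cases v <;> norm_num

lemma triangle_mu_at_one_le_half (a : Fin 3) :
    triangle.mu a 1 ≤ 1/2 ∧ triangle.mu 1 a ≤ 1/2 := by
  fin_cases a <;> norm_num [triangle]

lemma triangle_conn_zero_one : conn triangle.mu 0 1 = 1/2 :=
  le_antisymm
    (conn_le_of_forall_mu_right_le (by norm_num) fun a => (triangle_mu_at_one_le_half a).1)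
    (by simpa [triangle] using triangle.mu_le_conn (u := 0) (v := 1) (by simp [triangle]))

lemma triangle_conn_one_two : conn triangle.mu 1 2 = 1/2 :=
  le_antisymm
    (conn_le_of_forall_mu_left_le (by norm_num) fun b => (triangle_mu_at_one_le_half b).2)
    (by simpa [triangle] using triangle.mu_le_conn (u := 1) (v := 2) (by simp [triangle]))

lemma one_le_triangle_conn_zero_two : 1 ≤ conn triangle.mu 0 2 := by
  simpa [triangle] using triangle.mu_le_conn (u := 0) (v := 2) (by simp [triangle])

/-- Fuzzy subgraph connectivity need not be transitive. -/
theorem fsc_not_transitive :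
    ∃ (V : Type) (_ : Fintype V) (G : FuzzyGraph V) (S1 S2 S3 : Set V) (t : ℝ),
      S1.Nonempty ∧ S2.Nonempty ∧ S3.Nonempty ∧
      Disjoint S1 S2 ∧ Disjoint S2 S3 ∧ Disjoint S1 S3 ∧
      S1 ≠ Set.univ ∧ S2 ≠ Set.univ ∧ S3 ≠ Set.univ ∧
      connSS G.mu S1 S2 = t ∧ connSS G.mu S2 S3 = t ∧ connSS G.mu S1 S3 ≠ t := by
  refine ⟨Fin 3, inferInstance, triangle, {0}, {1}, {2}, 1/2, Set.singleton_nonempty _,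
    Set.singleton_nonempty _, Set.singleton_nonempty _, by simp, by simp, by simp,
    (Set.ne_univ_iff_exists_notMem _).2 ⟨1, by simp⟩,
    (Set.ne_univ_iff_exists_notMem _).2 ⟨0, by simp⟩,
    (Set.ne_univ_iff_exists_notMem _).2 ⟨0, by simp⟩, ?_, ?_, ?_⟩
  · rw [connSS_singleton, triangle_conn_zero_one]
  · rw [connSS_singleton, triangle_conn_one_two]
  · rw [connSS_singleton]
    exact ((by norm_num : (1/2 : ℝ) < 1).trans_le one_le_triangle_conn_zero_two).ne'
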